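/- There exists C > 0 such that for all h > 0 and ξ ∈ ℝ² with hξ ∈ [-3π/2, 3π/2]², the operator norm of (G₀(ξ) - iI)⁻¹ - (G̃₀ₕˢ(ξ) - iI)⁻¹ is at most Ch. -/

import Mathlib

noncomputable def matOpNorm {n : Type*} [Fintype n] [DecidableEq n]
    (A : Matrix n n ℂ) : ℝ :=
  ‖Matrix.toEuclideanCLM (𝕜 := ℂ) A‖

noncomputable def fh (h ξ₁ ξ₂ : ℝ) : ℝ :=
  4 / h * Real.sin (h * ξ₁ / 2) ^ 2 + 4 / h * Real.sin (h * ξ₂ / 2) ^ 2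

noncomputable def G0s2 (h m ξ₁ ξ₂ : ℝ) : Matrix (Fin 2) (Fin 2) ℂ :=
  !![(m : ℂ), ((Real.sin (h * ξ₁) / h : ℝ) : ℂ) - Complex.I * ((Real.sin (h * ξ₂) / h : ℝ) : ℂ);
     ((Real.sin (h * ξ₁) / h : ℝ) : ℂ) + Complex.I * ((Real.sin (h * ξ₂) / h : ℝ) : ℂ), (-m : ℂ)]

noncomputable def G0s2mod (h m ξ₁ ξ₂ : ℝ) : Matrix (Fin 2) (Fin 2) ℂ :=
  G0s2 h m ξ₁ ξ₂ + ((fh h ξ₁ ξ₂ : ℝ) : ℂ) • !![(1 : ℂ), 0; 0, -1]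

noncomputable def G0two (m ξ₁ ξ₂ : ℝ) : Matrix (Fin 2) (Fin 2) ℂ :=
  !![(m : ℂ), (ξ₁ : ℂ) - Complex.I * ξ₂;
     (ξ₁ : ℂ) + Complex.I * ξ₂, (-m : ℂ)]

/-!
Both symbols have the form `D = a σ₃ + b₁ σ₁ + b₂ σ₂` with real coefficients, so `D` is Hermitian
with `D² = r² I`, `r² = a² + b₁² + b₂²`. The C*-identity gives `‖D‖ = r` and, since
`(D - i)⁻¹ = (D + i) / (r² + 1)`, also `‖(D - i)⁻¹‖ = (r² + 1)^{-1/2}`. By the resolvent identity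
the difference of the two resolvents is at most `|Δ| (r² + 1)^{-1/2} (r'² + 1)^{-1/2}`, where `Δ`
is the difference of the coefficient vectors. Taylor's bound for `sin` and `f_h(ξ) ≤ h |ξ|²` give
`|Δ| ≤ 2 h |ξ|²`; and `r ≥ |ξ|` trivially, while `r' ≥ |ξ| / 5` on the zone `|h ξⱼ| ≤ 3π/2`, because
there `sin² θ + 16 sin⁴ (θ/2) ≥ 4 sin² (θ/2) ≥ θ² / 25`.
-/

section OperatorNorm

open Complex Matrix
open scoped Matrix.Norms.L2Operator

lemma matOpNorm_eq_norm {n : Type*} [Fintype n] [DecidableEq n] (A : Matrix n n ℂ) :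
    matOpNorm A = ‖A‖ :=
  rfl

lemma norm_eq_sqrt_of_conjTranspose_mul_self_eq {𝕜 n : Type*} [RCLike 𝕜] [Fintype n]
    [DecidableEq n] [Nonempty n] {A : Matrix n n 𝕜} {c : ℝ} (hc : 0 ≤ c)
    (hA : Aᴴ * A = (c : 𝕜) • 1) : ‖A‖ = √c := by
  rw [← Real.sqrt_sq (norm_nonneg A), sq, ← CStarRing.norm_star_mul_self, star_eq_conjTranspose,
    hA, norm_smul, norm_one, mul_one, RCLike.norm_ofReal, abs_of_nonneg hc]

lemma norm_inv_sub_inv_le {𝕜 n : Type*} [RCLike 𝕜] [Fintype n] [DecidableEq n]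
    {A B : Matrix n n 𝕜} (hA : IsUnit A) (hB : IsUnit B) :
    ‖A⁻¹ - B⁻¹‖ ≤ ‖A⁻¹‖ * ‖B - A‖ * ‖B⁻¹‖ := by
  rw [inv_sub_inv (iff_of_true hA hB)]
  exact (norm_mul_le _ _).trans (by gcongr; exact norm_mul_le _ _)

-- `a σ₃ + b₁ σ₁ + b₂ σ₂`, with the Pauli matrices `σⱼ`.
noncomputable def diracSymbol (a b₁ b₂ : ℝ) : Matrix (Fin 2) (Fin 2) ℂ :=
  !![(a : ℂ), (b₁ : ℂ) - I * b₂; (b₁ : ℂ) + I * b₂, (-a : ℂ)]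

section diracSymbol

variable (a b₁ b₂ : ℝ)

lemma conjTranspose_diracSymbol : (diracSymbol a b₁ b₂)ᴴ = diracSymbol a b₁ b₂ := by
  ext i j; fin_cases i <;> fin_cases j <;> simp [diracSymbol, Complex.ext_iff]

lemma diracSymbol_mul_self :
    diracSymbol a b₁ b₂ * diracSymbol a b₁ b₂ = ((a ^ 2 + b₁ ^ 2 + b₂ ^ 2 : ℝ) : ℂ) • 1 := by
  rw [diracSymbol, mul_fin_two, one_fin_two, smul_of]
  ext i j; fin_cases i <;> fin_cases j <;> simp <;> ring_nf <;> simp only [I_sq] <;> ring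

lemma diracSymbol_sub_diracSymbol (a' b₁' b₂' : ℝ) :
    diracSymbol a b₁ b₂ - diracSymbol a' b₁' b₂' =
      diracSymbol (a - a') (b₁ - b₁') (b₂ - b₂') := by
  ext i j; fin_cases i <;> fin_cases j <;> simp [diracSymbol] <;> ring

lemma norm_diracSymbol : ‖diracSymbol a b₁ b₂‖ = √(a ^ 2 + b₁ ^ 2 + b₂ ^ 2) :=
  norm_eq_sqrt_of_conjTranspose_mul_self_eq (by positivity) <| by
    rw [conjTranspose_diracSymbol, diracSymbol_mul_self]; rfl

lemma diracSymbol_sub_I_mul_add_I :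
    (diracSymbol a b₁ b₂ - I • 1) * (diracSymbol a b₁ b₂ + I • 1) =
      ((a ^ 2 + b₁ ^ 2 + b₂ ^ 2 + 1 : ℝ) : ℂ) • 1 := by
  simp only [sub_mul, mul_add, diracSymbol_mul_self, Matrix.smul_mul, Matrix.mul_smul, one_mul,
    mul_one, smul_smul, I_mul_I]
  push_cast
  module

lemma diracSymbol_sub_I_mul_inv :
    (diracSymbol a b₁ b₂ - I • 1) *
      ((((a ^ 2 + b₁ ^ 2 + b₂ ^ 2 + 1)⁻¹ : ℝ) : ℂ) • (diracSymbol a b₁ b₂ + I • 1)) = 1 := by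
  rw [Matrix.mul_smul, diracSymbol_sub_I_mul_add_I, smul_smul, ← ofReal_mul,
    inv_mul_cancel₀ (by positivity), ofReal_one, one_smul]

lemma inv_diracSymbol_sub_I :
    (diracSymbol a b₁ b₂ - I • 1)⁻¹ =
      (((a ^ 2 + b₁ ^ 2 + b₂ ^ 2 + 1)⁻¹ : ℝ) : ℂ) • (diracSymbol a b₁ b₂ + I • 1) :=
  inv_eq_right_inv (diracSymbol_sub_I_mul_inv a b₁ b₂)

lemma isUnit_diracSymbol_sub_I : IsUnit (diracSymbol a b₁ b₂ - I • 1) :=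
  (isUnit_iff_isUnit_det _).2 (isUnit_det_of_right_inverse (diracSymbol_sub_I_mul_inv a b₁ b₂))

lemma norm_inv_diracSymbol_sub_I :
    ‖(diracSymbol a b₁ b₂ - I • 1)⁻¹‖ = (√(a ^ 2 + b₁ ^ 2 + b₂ ^ 2 + 1))⁻¹ := by
  rw [← Real.sqrt_inv]
  refine norm_eq_sqrt_of_conjTranspose_mul_self_eq (by positivity) ?_
  rw [inv_diracSymbol_sub_I, conjTranspose_smul, conjTranspose_add, conjTranspose_diracSymbol,
    conjTranspose_smul, conjTranspose_one, Matrix.smul_mul, Matrix.mul_smul]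
  simp only [star_def, conj_ofReal, conj_I, neg_smul, ← sub_eq_add_neg,
    diracSymbol_sub_I_mul_add_I, smul_smul]
  rw [← ofReal_mul, inv_mul_cancel₀ (by positivity), ofReal_one, mul_one]
  rfl

lemma norm_inv_diracSymbol_sub_I_sub_le (a' b₁' b₂' : ℝ) :
    ‖(diracSymbol a b₁ b₂ - I • 1)⁻¹ - (diracSymbol a' b₁' b₂' - I • 1)⁻¹‖ ≤
      √((a' - a) ^ 2 + (b₁' - b₁) ^ 2 + (b₂' - b₂) ^ 2) /
        (√(a ^ 2 + b₁ ^ 2 + b₂ ^ 2 + 1) * √(a' ^ 2 + b₁' ^ 2 + b₂' ^ 2 + 1)) := by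
  refine (norm_inv_sub_inv_le (isUnit_diracSymbol_sub_I ..)
    (isUnit_diracSymbol_sub_I ..)).trans_eq ?_
  rw [sub_sub_sub_cancel_right, diracSymbol_sub_diracSymbol, norm_diracSymbol,
    norm_inv_diracSymbol_sub_I, norm_inv_diracSymbol_sub_I]
  ring

end diracSymbol

lemma G0two_eq_diracSymbol (m ξ₁ ξ₂ : ℝ) : G0two m ξ₁ ξ₂ = diracSymbol m ξ₁ ξ₂ :=
  rfl

lemma G0s2mod_eq_diracSymbol (h m ξ₁ ξ₂ : ℝ) :
    G0s2mod h m ξ₁ ξ₂ =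
      diracSymbol (m + fh h ξ₁ ξ₂) (Real.sin (h * ξ₁) / h) (Real.sin (h * ξ₂) / h) := by
  ext i j
  fin_cases i <;> fin_cases j <;> simp [G0s2mod, G0s2, diracSymbol, sub_eq_add_neg, add_comm]

end OperatorNorm

section SymbolEstimates

open Real

lemma abs_le_five_mul_abs_sin {x : ℝ} (hx : |x| ≤ 3 * π / 4) : |x| ≤ 5 * |sin x| := by
  rcases le_or_gt |x| (π / 2) with hsmall | hlarge
  · have h := mul_abs_le_abs_sin hsmall
    rw [div_mul_eq_mul_div, div_le_iff₀ pi_pos] at h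
    nlinarith [pi_lt_four, abs_nonneg (sin x)]
  · have hy : |(π - |x|)| ≤ π / 2 := abs_le.2 ⟨by linarith, by linarith⟩
    have h := mul_abs_le_abs_sin hy
    have hsin : |sin (π - |x|)| = |sin x| := by
      rw [sin_pi_sub]
      rcases abs_cases x with ⟨hx', _⟩ | ⟨hx', _⟩ <;> simp [hx', abs_neg]
    rw [hsin, abs_of_nonneg (by linarith), mul_sub, div_mul_cancel₀ _ pi_ne_zero] at h
    have hx' : 2 / π * |x| ≤ 3 / 2 := by
      rw [div_mul_eq_mul_div, div_le_iff₀ pi_pos]; linarith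
    linarith [pi_lt_d2]

lemma sq_le_sin_sq_add_sq (θ : ℝ) (hθ : |θ| ≤ 3 * π / 2) :
    θ ^ 2 ≤ 25 * (sin θ ^ 2 + (4 * sin (θ / 2) ^ 2) ^ 2) := by
  have hhalf : |θ / 2| ≤ 5 * |sin (θ / 2)| :=
    abs_le_five_mul_abs_sin (by rw [abs_div, abs_two]; linarith)
  have hu : θ ^ 2 ≤ 100 * sin (θ / 2) ^ 2 := by
    have := pow_le_pow_left₀ (abs_nonneg _) hhalf 2
    rw [mul_pow, sq_abs, sq_abs] at this
    linarith
  have hsin : sin θ ^ 2 = 4 * sin (θ / 2) ^ 2 * (1 - sin (θ / 2) ^ 2) := by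
    nth_rewrite 1 [show θ = 2 * (θ / 2) by ring]
    rw [sin_two_mul, ← cos_sq']
    ring
  nlinarith [sq_nonneg (sin (θ / 2))]

lemma sq_le_sin_div_sq_add_sq {h : ℝ} (hh : 0 < h) (x : ℝ) (hx : |h * x| ≤ 3 * π / 2) :
    x ^ 2 ≤ 25 * ((sin (h * x) / h) ^ 2 + (4 / h * sin (h * x / 2) ^ 2) ^ 2) := by
  have key := sq_le_sin_sq_add_sq (h * x) hx
  have e : 25 * ((sin (h * x) / h) ^ 2 + (4 / h * sin (h * x / 2) ^ 2) ^ 2) =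
      25 * (sin (h * x) ^ 2 + (4 * sin (h * x / 2) ^ 2) ^ 2) / h ^ 2 := by
    field_simp
  rw [e, le_div_iff₀ (by positivity)]
  linarith [mul_pow h x 2]

lemma abs_sin_div_sub_le {h : ℝ} (hh : 0 < h) (x : ℝ) (hx : |h * x| ≤ 3 * π / 2) :
    |sin (h * x) / h - x| ≤ h * x ^ 2 := by
  have e : sin (h * x) / h - x = -(h * x - sin (h * x)) / h := by field_simp; ring
  rw [e, abs_div, abs_neg, abs_of_pos hh, div_le_iff₀ hh]
  calc |h * x - sin (h * x)| ≤ |h * x| ^ 3 / 6 := abs_sub_sin_le _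
    _ = |h * x| / 6 * (h * x) ^ 2 := by rw [← sq_abs (h * x)]; ring
    _ ≤ 1 * (h * x) ^ 2 := by gcongr; linarith [pi_lt_four]
    _ = h * x ^ 2 * h := by ring

lemma fh_nonneg {h : ℝ} (hh : 0 ≤ h) (ξ₁ ξ₂ : ℝ) : 0 ≤ fh h ξ₁ ξ₂ := by
  unfold fh; positivity

lemma fh_le {h : ℝ} (hh : 0 ≤ h) (ξ₁ ξ₂ : ℝ) : fh h ξ₁ ξ₂ ≤ h * (ξ₁ ^ 2 + ξ₂ ^ 2) := by
  have hsin (x : ℝ) : 4 / h * sin (h * x / 2) ^ 2 ≤ h * x ^ 2 :=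
    calc 4 / h * sin (h * x / 2) ^ 2 ≤ 4 / h * (h * x / 2) ^ 2 :=
          mul_le_mul_of_nonneg_left sin_sq_le_sq (by positivity)
      _ = h * x ^ 2 := by
          rcases hh.eq_or_lt with rfl | hh
          · simp
          · field_simp; ring
  unfold fh
  linarith [hsin ξ₁, hsin ξ₂]

lemma sqrt_sq_add_sq_add_sq_le (x y z : ℝ) : √(x ^ 2 + y ^ 2 + z ^ 2) ≤ |x| + |y| + |z| :=
  sqrt_le_iff.2 ⟨by positivity, by
    nlinarith [sq_abs x, sq_abs y, sq_abs z, abs_nonneg x, abs_nonneg y, abs_nonneg z,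
      mul_nonneg (abs_nonneg x) (abs_nonneg y), mul_nonneg (abs_nonneg y) (abs_nonneg z),
      mul_nonneg (abs_nonneg x) (abs_nonneg z)]⟩

lemma le_mul_sqrt_mul_sqrt {x A B c : ℝ} (hx : 0 ≤ x) (hc : 0 ≤ c) (hA : x ≤ A)
    (hB : x ≤ c ^ 2 * B) : x ≤ c * (√A * √B) := by
  have hB' : √x ≤ c * √B := by
    rw [← sqrt_sq hc, ← sqrt_mul (sq_nonneg c)]; exact sqrt_le_sqrt hB
  calc x = √x * √x := (mul_self_sqrt hx).symm
    _ ≤ √A * (c * √B) := mul_le_mul (sqrt_le_sqrt hA) hB' (sqrt_nonneg x) (sqrt_nonneg A)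
    _ = c * (√A * √B) := by ring

variable {m h ξ₁ ξ₂ : ℝ}

lemma sqrt_symbol_coeff_dist_le (hh : 0 < h) (hξ₁ : |h * ξ₁| ≤ 3 * π / 2)
    (hξ₂ : |h * ξ₂| ≤ 3 * π / 2) :
    √((m + fh h ξ₁ ξ₂ - m) ^ 2 + (sin (h * ξ₁) / h - ξ₁) ^ 2 + (sin (h * ξ₂) / h - ξ₂) ^ 2) ≤
      2 * h * (ξ₁ ^ 2 + ξ₂ ^ 2) := by
  refine (sqrt_sq_add_sq_add_sq_le _ _ _).trans ?_
  rw [add_sub_cancel_left, abs_of_nonneg (fh_nonneg hh.le ξ₁ ξ₂)]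
  linarith [fh_le hh.le ξ₁ ξ₂, abs_sin_div_sub_le hh ξ₁ hξ₁, abs_sin_div_sub_le hh ξ₂ hξ₂]

lemma sum_sq_le_discrete_symbol_sq (hm : 0 ≤ m) (hh : 0 < h) (hξ₁ : |h * ξ₁| ≤ 3 * π / 2)
    (hξ₂ : |h * ξ₂| ≤ 3 * π / 2) :
    ξ₁ ^ 2 + ξ₂ ^ 2 ≤
      25 * ((m + fh h ξ₁ ξ₂) ^ 2 + (sin (h * ξ₁) / h) ^ 2 + (sin (h * ξ₂) / h) ^ 2) := by
  have hf : (4 / h * sin (h * ξ₁ / 2) ^ 2) ^ 2 + (4 / h * sin (h * ξ₂ / 2) ^ 2) ^ 2 ≤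
      (m + fh h ξ₁ ξ₂) ^ 2 := by
    have h₁ : 0 ≤ 4 / h * sin (h * ξ₁ / 2) ^ 2 := by positivity
    have h₂ : 0 ≤ 4 / h * sin (h * ξ₂ / 2) ^ 2 := by positivity
    unfold fh
    nlinarith [mul_nonneg h₁ h₂]
  linarith [sq_le_sin_div_sq_add_sq hh ξ₁ hξ₁, sq_le_sin_div_sq_add_sq hh ξ₂ hξ₂]

end SymbolEstimates

theorem resolvent_diff_bound_2D_symmetric_mod (m : ℝ) (hm : 0 ≤ m) :
    ∃ C > 0, ∀ h : ℝ, 0 < h → ∀ ξ₁ ξ₂ : ℝ,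
      h * ξ₁ ∈ Set.Icc (-(3 * Real.pi / 2)) (3 * Real.pi / 2) →
      h * ξ₂ ∈ Set.Icc (-(3 * Real.pi / 2)) (3 * Real.pi / 2) →
      matOpNorm ((G0two m ξ₁ ξ₂ - Complex.I • (1 : Matrix (Fin 2) (Fin 2) ℂ))⁻¹
          - (G0s2mod h m ξ₁ ξ₂ - Complex.I • (1 : Matrix (Fin 2) (Fin 2) ℂ))⁻¹)
        ≤ C * h := by
  refine ⟨10, by norm_num, fun h hh ξ₁ ξ₂ hξ₁ hξ₂ => ?_⟩
  replace hξ₁ := abs_le.2 hξ₁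
  replace hξ₂ := abs_le.2 hξ₂
  rw [matOpNorm_eq_norm, G0two_eq_diracSymbol, G0s2mod_eq_diracSymbol]
  refine (norm_inv_diracSymbol_sub_I_sub_le ..).trans ?_
  rw [div_le_iff₀ (by positivity)]
  refine (sqrt_symbol_coeff_dist_le hh hξ₁ hξ₂).trans ?_
  have hξ : ξ₁ ^ 2 + ξ₂ ^ 2 ≤ 5 * (√(m ^ 2 + ξ₁ ^ 2 + ξ₂ ^ 2 + 1) *
      √((m + fh h ξ₁ ξ₂) ^ 2 + (Real.sin (h * ξ₁) / h) ^ 2 + (Real.sin (h * ξ₂) / h) ^ 2 + 1)) :=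
    le_mul_sqrt_mul_sqrt (by positivity) (by norm_num) (by linarith [sq_nonneg m])
      (by linarith [sum_sq_le_discrete_symbol_sq hm hh hξ₁ hξ₂])
  linarith [mul_le_mul_of_nonneg_left hξ (by positivity : (0 : ℝ) ≤ 2 * h)]
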